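/- arXiv:2510.23804 — 2 statements merged into one kernel-verified Lean document; each statement's English description precedes it below -/
import Mathlib

section
/- Let ω > 1, S > 0, and γ ∈ ℝ. Define the mean vectors μ₊ = (μ/2)(ω−1/ω, 2)ᵀ, μ₊₋ = (μ/2)(ω−1/ω, −2)ᵀ, μ₋ = (μ/2)(−(ω+1/ω), 0)ᵀ, where S = μ/σ with μ, σ > 0. For any nonzero w ∈ ℝ² with w̄ = w/‖w‖, and for α ∈ {+, ±, −}, set p_α(w) = Φ(⟨U(γ)μ_α, w̄⟩/σ), where Φ is the standard Gaussian CDF and U(γ) is the 2×2 rotation matrix by angle γ. Then p₊(w) + p₊₋(w) + 2p₋(w) ≥ c, where c := Φ(S·min{1, (ω−1/ω)/2}). Moreover c ∈ [1/2, 1] for every ω > 1 and μ, σ > 0. -/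
/-- The standard Gaussian probability density function. -/
noncomputable def gaussPDF (t : ℝ) : ℝ := (Real.sqrt (2 * Real.pi))⁻¹ * Real.exp (-(t ^ 2) / 2)

/-- The standard Gaussian cumulative distribution function `Φ`. -/
noncomputable def gaussCDF (t : ℝ) : ℝ := ∫ s in Set.Iic t, gaussPDF s

lemma gaussPDF_nonneg (t : ℝ) : 0 ≤ gaussPDF t := by
  unfold gaussPDF
  positivity

lemma gaussPDF_integrable : MeasureTheory.Integrable gaussPDF := by
  have h : gaussPDF = fun t => (Real.sqrt (2 * Real.pi))⁻¹ * Real.exp (-(1/2 : ℝ) * t ^ 2) := by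
    funext t; unfold gaussPDF; ring_nf
  rw [h]
  exact (integrable_exp_neg_mul_sq (by norm_num)).const_mul _

lemma integral_gaussPDF : ∫ t, gaussPDF t = 1 := by
  have h : ∫ t, gaussPDF t = (Real.sqrt (2 * Real.pi))⁻¹ * ∫ t : ℝ, Real.exp (-(1/2 : ℝ) * t ^ 2) := by
    rw [← MeasureTheory.integral_const_mul]
    congr 1; funext t; unfold gaussPDF; ring_nf
  rw [h, integral_gaussian]
  have : (Real.pi / (1/2 : ℝ)) = 2 * Real.pi := by ring
  rw [this, inv_mul_cancel₀]
  positivity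

lemma gaussCDF_mono : Monotone gaussCDF := by
  intro s t hst
  unfold gaussCDF
  apply MeasureTheory.setIntegral_mono_set gaussPDF_integrable.integrableOn
  · exact Filter.Eventually.of_forall fun x => gaussPDF_nonneg x
  · exact Filter.Eventually.of_forall (Set.Iic_subset_Iic.mpr hst)

lemma gaussCDF_nonneg (t : ℝ) : 0 ≤ gaussCDF t :=
  MeasureTheory.setIntegral_nonneg measurableSet_Iic fun x _ => gaussPDF_nonneg x

lemma gaussCDF_le_one (t : ℝ) : gaussCDF t ≤ 1 := by
  rw [← integral_gaussPDF]
  exact MeasureTheory.setIntegral_le_integral gaussPDF_integrable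
    (Filter.Eventually.of_forall fun x => gaussPDF_nonneg x)

lemma gaussCDF_zero : gaussCDF 0 = 1 / 2 := by
  have heven : ∀ x : ℝ, gaussPDF (-x) = gaussPDF x := by
    intro x; unfold gaussPDF; ring_nf
  have h1 : gaussCDF 0 = ∫ x in Set.Ioi (0:ℝ), gaussPDF x := by
    unfold gaussCDF
    rw [show (∫ x in Set.Iic (0:ℝ), gaussPDF x) = ∫ x in Set.Iic (0:ℝ), gaussPDF (-x) by
      simp_rw [heven]]
    rw [integral_comp_neg_Iic]
    norm_num
  have h2 : gaussCDF 0 + ∫ x in Set.Ioi (0:ℝ), gaussPDF x = 1 := by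
    unfold gaussCDF
    rw [intervalIntegral.integral_Iic_add_Ioi gaussPDF_integrable.integrableOn
      gaussPDF_integrable.integrableOn, integral_gaussPDF]
  rw [h1] at h2 ⊢
  linarith


/-- Counter-clockwise rotation of a vector in `ℝ²` by `γ` radians: the matrix `U(γ)`. -/
noncomputable def rot2 (γ : ℝ) (x : ℝ × ℝ) : ℝ × ℝ :=
  (Real.cos γ * x.1 - Real.sin γ * x.2, Real.sin γ * x.1 + Real.cos γ * x.2)

/-- Euclidean inner product on `ℝ²`. -/
def dot2 (v w : ℝ × ℝ) : ℝ := v.1 * w.1 + v.2 * w.2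

/-- Normalization `w̄ = w / ‖w‖` (Euclidean norm) of a vector in `ℝ²`. -/
noncomputable def normalize2 (w : ℝ × ℝ) : ℝ × ℝ :=
  (w.1 / Real.sqrt (w.1 ^ 2 + w.2 ^ 2), w.2 / Real.sqrt (w.1 ^ 2 + w.2 ^ 2))

/-- `μ₊ = (μ/2)·(ω − 1/ω, 2)ᵀ`. -/
noncomputable def muPlus (μ ω : ℝ) : ℝ × ℝ := (μ / 2 * (ω - 1 / ω), μ)

/-- `μ₊₋ = (μ/2)·(ω − 1/ω, −2)ᵀ`. -/
noncomputable def muMix (μ ω : ℝ) : ℝ × ℝ := (μ / 2 * (ω - 1 / ω), -μ)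

/-- `μ₋ = (μ/2)·(−(ω + 1/ω), 0)ᵀ`. -/
noncomputable def muMinus (μ ω : ℝ) : ℝ × ℝ := (-(μ / 2 * (ω + 1 / ω)), 0)

set_option maxHeartbeats 1000000 in
/-- With `S = μ/σ > 0`, `ω > 1`, any angle `γ` and any nonzero `w ∈ ℝ²`,
setting `p_α(w) = Φ(⟨U(γ)μ_α, w̄⟩/σ)` for `α ∈ {+, ±, −}`, we have
`p₊(w) + p₊₋(w) + 2 p₋(w) ≥ c` where `c = Φ(S · min{1, (ω − 1/ω)/2})`; moreover
`c ∈ [1/2, 1]`. -/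
theorem stmt_3 (μ σ ω γ : ℝ) (hμ : 0 < μ) (hσ : 0 < σ) (hω : 1 < ω)
    (w : ℝ × ℝ) (hw : w ≠ 0) :
    (gaussCDF (dot2 (rot2 γ (muPlus μ ω)) (normalize2 w) / σ)
        + gaussCDF (dot2 (rot2 γ (muMix μ ω)) (normalize2 w) / σ)
        + 2 * gaussCDF (dot2 (rot2 γ (muMinus μ ω)) (normalize2 w) / σ)
      ≥ gaussCDF ((μ / σ) * min 1 ((ω - 1 / ω) / 2)))
    ∧ 1 / 2 ≤ gaussCDF ((μ / σ) * min 1 ((ω - 1 / ω) / 2))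
    ∧ gaussCDF ((μ / σ) * min 1 ((ω - 1 / ω) / 2)) ≤ 1 := by
  have hω0 : 0 < ω := lt_trans one_pos hω
  have h1ω : 1 / ω < ω := by rw [div_lt_iff₀ hω0]; nlinarith
  set m : ℝ := (ω - 1 / ω) / 2 with hm_def
  have hm : 0 < m := by rw [hm_def]; linarith
  set M : ℝ := (ω + 1 / ω) / 2 with hM_def
  have hM : 0 < M := by rw [hM_def]; positivity
  have hmin0 : 0 ≤ min 1 m := le_min (by norm_num) hm.le
  have hSpos : 0 ≤ μ / σ := (div_pos hμ hσ).le
  have hhalf : 1 / 2 ≤ gaussCDF ((μ / σ) * min 1 m) := by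
    rw [← gaussCDF_zero]
    exact gaussCDF_mono (mul_nonneg hSpos hmin0)
  refine ⟨?_, hhalf, gaussCDF_le_one _⟩
  -- set up coordinates
  set r : ℝ := Real.sqrt (w.1 ^ 2 + w.2 ^ 2) with hr_def
  have hw2 : 0 < w.1 ^ 2 + w.2 ^ 2 := by
    rcases eq_or_ne w.1 0 with h1 | h1
    · rcases eq_or_ne w.2 0 with h2 | h2
      · exact absurd (Prod.ext h1 h2) hw
      · positivity
    · positivity
  have hr : 0 < r := Real.sqrt_pos.mpr hw2
  set a : ℝ := w.1 / r with ha_def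
  set b : ℝ := w.2 / r with hb_def
  have hab : a ^ 2 + b ^ 2 = 1 := by
    rw [ha_def, hb_def]
    have hr2 : r ^ 2 = w.1 ^ 2 + w.2 ^ 2 := Real.sq_sqrt hw2.le
    field_simp
    linarith
  have hn1 : (normalize2 w).1 = a := rfl
  have hn2 : (normalize2 w).2 = b := rfl
  set x : ℝ := Real.cos γ * a + Real.sin γ * b with hx_def
  set y : ℝ := -Real.sin γ * a + Real.cos γ * b with hy_def
  have hxy : x ^ 2 + y ^ 2 = 1 := by
    have h := Real.sin_sq_add_cos_sq γ
    rw [hx_def, hy_def]; nlinarith [hab]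
  have e : ∀ p q : ℝ, dot2 (rot2 γ (p, q)) (normalize2 w) = p * x + q * y := by
    intro p q
    rw [hx_def, hy_def, ha_def, hb_def]
    simp only [dot2, rot2, normalize2, hr_def]
    ring
  have d1 : dot2 (rot2 γ (muPlus μ ω)) (normalize2 w) / σ = (μ / σ) * (m * x + y) := by
    rw [show muPlus μ ω = (μ / 2 * (ω - 1 / ω), μ) from rfl, e, hm_def]; ring
  have d2 : dot2 (rot2 γ (muMix μ ω)) (normalize2 w) / σ = (μ / σ) * (m * x - y) := by
    rw [show muMix μ ω = (μ / 2 * (ω - 1 / ω), -μ) from rfl, e, hm_def]; ring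
  have d3 : dot2 (rot2 γ (muMinus μ ω)) (normalize2 w) / σ = (μ / σ) * (-(M * x)) := by
    rw [show muMinus μ ω = (-(μ / 2 * (ω + 1 / ω)), 0) from rfl, e, hM_def]; ring
  rw [d1, d2, d3]
  rcases le_or_gt x 0 with hx | hx
  · -- minus term alone dominates
    have h3 : 1 / 2 ≤ gaussCDF ((μ / σ) * (-(M * x))) := by
      rw [← gaussCDF_zero]
      exact gaussCDF_mono (mul_nonneg hSpos (by nlinarith))
    linarith [gaussCDF_nonneg ((μ / σ) * (m * x + y)),
      gaussCDF_nonneg ((μ / σ) * (m * x - y)), gaussCDF_le_one ((μ / σ) * min 1 m)]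
  · have hmin1 : min 1 m ≤ 1 := min_le_left _ _
    have hmin2 : min 1 m ≤ m := min_le_right _ _
    rcases le_or_gt 0 y with hy | hy
    · have hxy1 : 1 ≤ x + y := by nlinarith [mul_nonneg hx.le hy]
      have key : min 1 m ≤ m * x + y := by
        nlinarith [mul_nonneg (sub_nonneg.mpr hmin2) hx.le,
          mul_nonneg (sub_nonneg.mpr hmin1) hy,
          mul_nonneg hmin0 (by linarith : (0:ℝ) ≤ x + y - 1)]
      have h1 : gaussCDF ((μ / σ) * min 1 m) ≤ gaussCDF ((μ / σ) * (m * x + y)) :=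
        gaussCDF_mono (mul_le_mul_of_nonneg_left key hSpos)
      linarith [gaussCDF_nonneg ((μ / σ) * (m * x - y)),
        gaussCDF_nonneg ((μ / σ) * (-(M * x)))]
    · have hxy1 : 1 ≤ x + (-y) := by nlinarith [mul_nonneg hx.le (neg_nonneg.mpr hy.le)]
      have key : min 1 m ≤ m * x - y := by
        nlinarith [mul_nonneg (sub_nonneg.mpr hmin2) hx.le,
          mul_nonneg (sub_nonneg.mpr hmin1) (neg_nonneg.mpr hy.le),
          mul_nonneg hmin0 (by linarith : (0:ℝ) ≤ x + (-y) - 1)]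
      have h2 : gaussCDF ((μ / σ) * min 1 m) ≤ gaussCDF ((μ / σ) * (m * x - y)) :=
        gaussCDF_mono (mul_le_mul_of_nonneg_left key hSpos)
      linarith [gaussCDF_nonneg ((μ / σ) * (m * x + y)),
        gaussCDF_nonneg ((μ / σ) * (-(M * x)))]
end

section
/- Let f be a feed-forward network as in Definition 4.1 with input dimension d and parameters in ℝᵖ, and let the population losses L(·;f) and L^(U)(·;f) (for U ∈ O(d)) be differentiable, with Q^(U) ∈ O(p) the induced parameter rotation. Let ρ be a probability distribution on ℝᵖ that is rotationally invariant (its pushforward under θ ↦ Vθ equals ρ for every V ∈ O(p)), and assume the gradient outer products are ρ-integrable. Then EGOP_ρ(L^(U)(·;f)) = (Q^(U))ᵀ · EGOP_ρ(L(·;f)) · Q^(U), where EGOP_ρ(g) = E_{θ~ρ}[∇g(θ)∇g(θ)ᵀ]. -/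
open MeasureTheory Matrix

/-- Index set for the parameter vector `θ ∈ ℝᵖ` of a feed-forward network (Definition 4.1)
with input dimension `d` and `L+1` hidden layers of widths `m 1, …, m (L+1)` (scalar output).
The five summands index, respectively: the entries of the first-layer weight matrix
`W₁ ∈ ℝ^{m₁×d}`; the entries of the deeper hidden-layer weight matrices
`W_{j+2} ∈ ℝ^{m_{j+2}×m_{j+1}}` for `j < L`; the entries of the hidden-layer bias vectors;
the entries of the output-layer weight (row) vector; and the output bias. -/
abbrev PIdx (d L : ℕ) (m : ℕ → ℕ) : Type :=
  (Fin (m 1) × Fin d) ⊕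
  ((j : Fin L) × (Fin (m (j.1 + 2)) × Fin (m (j.1 + 1)))) ⊕
  ((j : Fin (L + 1)) × Fin (m (j.1 + 1))) ⊕
  Fin (m (L + 1)) ⊕ Unit

/-- The parameter space `ℝᵖ` of the network, presented with coordinates `PIdx d L m`. -/
abbrev PSpace (d L : ℕ) (m : ℕ → ℕ) : Type := PIdx d L m → ℝ

/-- Hidden-layer outputs of the network (Definition 4.1): `hLayer … j` is the output of
hidden layer `j+1`, i.e. `h₁ = x` and `h_{j+1} = σ_{j+1}(W_j h_j + b_j)` entrywise. -/
noncomputable def hLayer (d L : ℕ) (m : ℕ → ℕ) (act : ℕ → ℝ → ℝ) (θ : PSpace d L m)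
    (x : Fin d → ℝ) : (j : ℕ) → Fin (m (j + 1)) → ℝ
  | 0 => fun i =>
      act 1 ((∑ c, θ (Sum.inl (i, c)) * x c)
        + θ (Sum.inr (Sum.inr (Sum.inl ⟨⟨0, Nat.succ_pos L⟩, i⟩))))
  | j + 1 => fun i =>
      if hj : j < L then
        act (j + 2)
          ((∑ c, θ (Sum.inr (Sum.inl ⟨⟨j, hj⟩, (i, c)⟩)) * hLayer d L m act θ x j c)
            + θ (Sum.inr (Sum.inr (Sum.inl ⟨⟨j + 1, by omega⟩, i⟩))))
      else 0

/-- The (scalar-valued) feed-forward network of Definition 4.1: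
`f(θ; x) = W_{L+1} h_L(θ;x) + b_{L+1}`. -/
noncomputable def ffnet (d L : ℕ) (m : ℕ → ℕ) (act : ℕ → ℝ → ℝ) (θ : PSpace d L m)
    (x : Fin d → ℝ) : ℝ :=
  (∑ i, θ (Sum.inr (Sum.inr (Sum.inr (Sum.inl i)))) * hLayer d L m act θ x L i)
    + θ (Sum.inr (Sum.inr (Sum.inr (Sum.inr ()))))

/-- The parameter rotation `Q^(U)` induced by a data-space matrix `U`: it acts on the
`vec(W₁)` coordinates by the block `Uᵀ ⊗ I_{m₁}` (i.e. `W₁ ↦ W₁U`) and is the identity on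
all remaining coordinates. -/
noncomputable def rotQ (d L : ℕ) (m : ℕ → ℕ) (U : Matrix (Fin d) (Fin d) ℝ)
    (θ : PSpace d L m) : PSpace d L m :=
  fun idx =>
    match idx with
    | Sum.inl (i, c) => ∑ c', θ (Sum.inl (i, c')) * U c' c
    | idx => θ idx

/-- The gradient `∇g(θ)` of a function on parameter space, as a vector of partial
derivatives. -/
noncomputable def gradVec (d L : ℕ) (m : ℕ → ℕ) (g : PSpace d L m → ℝ)
    (θ : PSpace d L m) : PSpace d L m :=
  fun i => fderiv ℝ g θ (Pi.single i 1)

/-- The rotated feature-label distribution `D^(U)`: the law of `(Ux, y)` for `(x,y) ~ D`. -/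
noncomputable def rotMeas (d : ℕ) (U : Matrix (Fin d) (Fin d) ℝ)
    (D : Measure ((Fin d → ℝ) × ℝ)) : Measure ((Fin d → ℝ) × ℝ) :=
  D.map (fun q => (U.mulVec q.1, q.2))

/-- The population loss `L(θ; g) = E_{(x,y)~D}[ℓ(y, g(θ;x))]`. -/
noncomputable def popLoss {d : ℕ} {P : Type*} (D : Measure ((Fin d → ℝ) × ℝ))
    (ℓ : ℝ → ℝ → ℝ) (g : P → (Fin d → ℝ) → ℝ) (θ : P) : ℝ :=
  ∫ q, ℓ q.2 (g θ q.1) ∂D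

/-- The matrix (in the coordinates `PIdx d L m`) of the parameter rotation `Q^(U)`. -/
noncomputable def rotQMat (d L : ℕ) (m : ℕ → ℕ) (U : Matrix (Fin d) (Fin d) ℝ) :
    Matrix (PIdx d L m) (PIdx d L m) ℝ :=
  Matrix.of fun r c => rotQ d L m U (Pi.single c 1) r

/-- The expected gradient outer product (EGOP) matrix of `g : ℝᵖ → ℝ` with respect to a
sampling distribution `ρ`: `EGOP_ρ(g) = E_{θ~ρ}[∇g(θ)∇g(θ)ᵀ]`. -/
noncomputable def EGOP (d L : ℕ) (m : ℕ → ℕ) (ρ : Measure (PSpace d L m))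
    (g : PSpace d L m → ℝ) : Matrix (PIdx d L m) (PIdx d L m) ℝ :=
  Matrix.of fun i j => ∫ θ, gradVec d L m g θ i * gradVec d L m g θ j ∂ρ

variable {d L : ℕ} {m : ℕ → ℕ} {U V : Matrix (Fin d) (Fin d) ℝ} {θ : PSpace d L m}

@[simp] lemma rotQ_inl (i : Fin (m 1)) (c : Fin d) :
    rotQ d L m U θ (Sum.inl (i, c)) = ∑ c', θ (Sum.inl (i, c')) * U c' c := rfl

@[simp] lemma rotQ_inr (idx) :
    rotQ d L m U θ (Sum.inr idx) = θ (Sum.inr idx) := rfl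

lemma rotQ_comp : rotQ d L m V (rotQ d L m U θ) = rotQ d L m (U * V) θ := by
  funext idx
  rcases idx with ⟨i, c⟩ | idx
  · simp only [rotQ_inl, Matrix.mul_apply, Finset.sum_mul, Finset.mul_sum]
    rw [Finset.sum_comm]
    exact Finset.sum_congr rfl fun c' _ => Finset.sum_congr rfl fun c'' _ => by ring
  · rfl

lemma rotQ_one : rotQ d L m 1 θ = θ := by
  funext idx
  rcases idx with ⟨i, c⟩ | idx
  · simp [Matrix.one_apply]
  · rfl

lemma mulVec_rotQMat : (rotQMat d L m U).mulVec θ = rotQ d L m U θ := by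
  funext r
  rcases r with ⟨i, c⟩ | idx
  · simp only [Matrix.mulVec, Matrix.of_apply, rotQMat, dotProduct, rotQ_inl,
      Finset.sum_mul]
    rw [Finset.sum_comm]
    simp [Pi.single_apply, mul_comm]
  · simp [Matrix.mulVec, rotQMat, dotProduct, rotQ_inr, Pi.single_apply]

lemma mat_ext_mulVec {ι : Type*} [Fintype ι] [DecidableEq ι]
    {A B : Matrix ι ι ℝ} (h : ∀ v, A.mulVec v = B.mulVec v) : A = B := by
  ext i j
  have := congrFun (h (Pi.single j 1)) i
  simpa [Matrix.mulVec_single] using this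

lemma rotQMat_mul :
    rotQMat d L m V * rotQMat d L m U = rotQMat d L m (U * V) := by
  apply mat_ext_mulVec
  intro v
  rw [← Matrix.mulVec_mulVec, mulVec_rotQMat, mulVec_rotQMat, mulVec_rotQMat, rotQ_comp]

lemma rotQMat_one : rotQMat d L m (1 : Matrix (Fin d) (Fin d) ℝ) = 1 := by
  ext r c
  simp only [rotQMat, Matrix.of_apply, rotQ_one, Matrix.one_apply, Pi.single_apply]

lemma rotQMat_transpose : (rotQMat d L m U)ᵀ = rotQMat d L m Uᵀ := by
  ext r c
  simp only [Matrix.transpose_apply, rotQMat, Matrix.of_apply]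
  rcases r with ⟨i, a⟩ | r <;> rcases c with ⟨i', a'⟩ | c <;>
    simp [Pi.single_apply, Sum.inl.injEq, Prod.mk.injEq, eq_comm, Finset.sum_ite_eq,
      Matrix.transpose_apply, ite_and]

lemma hLayer_rotQ (act : ℕ → ℝ → ℝ) (x : Fin d → ℝ) (j : ℕ) :
    hLayer d L m act (rotQ d L m U θ) x j = hLayer d L m act θ (U.mulVec x) j := by
  induction j with
  | zero =>
      funext i
      simp only [hLayer, rotQ_inl, rotQ_inr, Finset.sum_mul, Matrix.mulVec, dotProduct,
        Finset.mul_sum]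
      rw [Finset.sum_comm]
      exact congrArg _ (congrArg (· + _)
        (Finset.sum_congr rfl fun a _ => Finset.sum_congr rfl fun b _ => by ring))
  | succ j ih =>
      funext i
      simp only [hLayer, rotQ_inr, ih]

lemma ffnet_rotQ (act : ℕ → ℝ → ℝ) (x : Fin d → ℝ) :
    ffnet d L m act (rotQ d L m U θ) x = ffnet d L m act θ (U.mulVec x) := by
  simp only [ffnet, rotQ_inr, hLayer_rotQ]

lemma measurable_mulVec_fun : Measurable (fun v : Fin d → ℝ => U.mulVec v) := by
  have : Continuous (U.mulVecLin : (Fin d → ℝ) →ₗ[ℝ] (Fin d → ℝ)) :=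
    LinearMap.continuous_of_finiteDimensional _
  exact this.measurable

lemma popLoss_rotQ (act : ℕ → ℝ → ℝ) (D : Measure ((Fin d → ℝ) × ℝ)) (ℓ : ℝ → ℝ → ℝ)
    (hmeas : ∀ θ : PSpace d L m,
      Measurable (fun q : (Fin d → ℝ) × ℝ => ℓ q.2 (ffnet d L m act θ q.1)))
    (θ : PSpace d L m) :
    popLoss (rotMeas d U D) ℓ (ffnet d L m act) θ
      = popLoss D ℓ (ffnet d L m act) (rotQ d L m U θ) := by
  have hφ : Measurable (fun q : (Fin d → ℝ) × ℝ => (U.mulVec q.1, q.2)) :=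
    (measurable_mulVec_fun.comp measurable_fst).prod measurable_snd
  simp only [popLoss, rotMeas]
  rw [integral_map hφ.aemeasurable (hmeas θ).aestronglyMeasurable]
  simp only [Function.comp]
  exact integral_congr_ae (Filter.Eventually.of_forall fun q => by
    simp only []
    rw [← ffnet_rotQ])

noncomputable def rotQclm (d L : ℕ) (m : ℕ → ℕ) (U : Matrix (Fin d) (Fin d) ℝ) :
    PSpace d L m →L[ℝ] PSpace d L m :=
  LinearMap.toContinuousLinearMap ((rotQMat d L m U).mulVecLin)

lemma rotQclm_apply : rotQclm d L m U θ = rotQ d L m U θ := by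
  rw [rotQclm, LinearMap.coe_toContinuousLinearMap', Matrix.mulVecLin_apply, mulVec_rotQMat]

lemma clm_apply_eq_sum (f : PSpace d L m →L[ℝ] ℝ) (v : PSpace d L m) :
    f v = ∑ a, v a * f (Pi.single a 1) := by
  have hv : v = ∑ a, v a • (Pi.single a 1 : PSpace d L m) := by
    simp only [← Pi.single_smul, smul_eq_mul, mul_one, Finset.univ_sum_single]
  conv_lhs => rw [hv]
  rw [map_sum]
  simp [smul_eq_mul]

lemma gradVec_rotQ (F : PSpace d L m → ℝ) (hF : Differentiable ℝ F)
    (θ : PSpace d L m) (i : PIdx d L m) :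
    gradVec d L m (fun θ => F (rotQ d L m U θ)) θ i
      = ∑ a, rotQMat d L m U a i * gradVec d L m F (rotQ d L m U θ) a := by
  have hfun : (fun θ => F (rotQ d L m U θ)) = F ∘ (rotQclm d L m U) := by
    funext ψ
    simp [Function.comp, rotQclm_apply]
  have hf : fderiv ℝ (fun θ => F (rotQ d L m U θ)) θ
      = (fderiv ℝ F (rotQ d L m U θ)).comp (rotQclm d L m U) := by
    rw [hfun]
    rw [fderiv_comp θ (hF _) (rotQclm d L m U).differentiableAt,
      (rotQclm d L m U).fderiv]
    rw [rotQclm_apply]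
  simp only [gradVec, hf, ContinuousLinearMap.comp_apply]
  rw [rotQclm_apply, clm_apply_eq_sum]
  exact Finset.sum_congr rfl fun a _ => by rw [rotQMat]; rfl

/-- Let the population losses `L(·;f)` and `L^(U)(·;f)` be differentiable,
let `ρ` be a rotationally invariant probability distribution on parameter space, and assume
the gradient outer products are `ρ`-integrable.  Then
`EGOP_ρ(L^(U)(·;f)) = (Q^(U))ᵀ · EGOP_ρ(L(·;f)) · Q^(U)`. -/
theorem stmt_10 (d L : ℕ) (m : ℕ → ℕ) (act : ℕ → ℝ → ℝ)
    (D : Measure ((Fin d → ℝ) × ℝ)) (ℓ : ℝ → ℝ → ℝ)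
    (U : Matrix (Fin d) (Fin d) ℝ) (hU : Uᵀ * U = 1) (hU' : U * Uᵀ = 1)
    (ρ : Measure (PSpace d L m)) [IsProbabilityMeasure ρ]
    -- `ρ` is rotationally invariant:
    (hρ : ∀ V : Matrix (PIdx d L m) (PIdx d L m) ℝ, Vᵀ * V = 1 →
      ρ.map (fun θ => V.mulVec θ) = ρ)
    -- the population losses are well defined and differentiable:
    (hmeas : ∀ θ : PSpace d L m,
      Measurable (fun q : (Fin d → ℝ) × ℝ => ℓ q.2 (ffnet d L m act θ q.1)))
    (hint : ∀ θ : PSpace d L m,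
      Integrable (fun q : (Fin d → ℝ) × ℝ => ℓ q.2 (ffnet d L m act θ q.1)) D)
    (hdiff : Differentiable ℝ (popLoss D ℓ (ffnet d L m act)))
    (hdiff' : Differentiable ℝ (popLoss (rotMeas d U D) ℓ (ffnet d L m act)))
    -- measurability and integrability of the gradient outer products:
    (hgmeas : ∀ i : PIdx d L m,
      Measurable (fun θ => gradVec d L m (popLoss D ℓ (ffnet d L m act)) θ i))
    (hgint : ∀ i j : PIdx d L m,
      Integrable (fun θ => gradVec d L m (popLoss D ℓ (ffnet d L m act)) θ i
        * gradVec d L m (popLoss D ℓ (ffnet d L m act)) θ j) ρ)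
    (hgint' : ∀ i j : PIdx d L m,
      Integrable (fun θ => gradVec d L m (popLoss (rotMeas d U D) ℓ (ffnet d L m act)) θ i
        * gradVec d L m (popLoss (rotMeas d U D) ℓ (ffnet d L m act)) θ j) ρ) :
    EGOP d L m ρ (popLoss (rotMeas d U D) ℓ (ffnet d L m act))
      = (rotQMat d L m U)ᵀ * EGOP d L m ρ (popLoss D ℓ (ffnet d L m act))
          * rotQMat d L m U := by
  set F := popLoss D ℓ (ffnet d L m act) with hF
  set Q := rotQMat d L m U with hQ
  have hFU : popLoss (rotMeas d U D) ℓ (ffnet d L m act)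
      = fun θ => F (rotQ d L m U θ) := funext fun θ => popLoss_rotQ act D ℓ hmeas θ
  have hQorth : Qᵀ * Q = 1 := by
    rw [hQ, rotQMat_transpose, rotQMat_mul, hU', rotQMat_one]
  have hQfun : (fun θ : PSpace d L m => Q.mulVec θ) = fun θ => rotQ d L m U θ :=
    funext fun θ => mulVec_rotQMat
  have hmap : ρ.map (fun θ => rotQ d L m U θ) = ρ := by
    rw [← hQfun]; exact hρ Q hQorth
  have hQmeas : Measurable (fun θ : PSpace d L m => rotQ d L m U θ) := by
    have h1 := (rotQclm d L m U).continuous.measurable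
    have h2 : ⇑(rotQclm d L m U) = fun θ => rotQ d L m U θ :=
      funext fun θ => rotQclm_apply
    rwa [h2] at h1
  set G := fun a (θ : PSpace d L m) => gradVec d L m F θ a with hG
  have hg' : ∀ (θ : PSpace d L m) (i : PIdx d L m),
      gradVec d L m (popLoss (rotMeas d U D) ℓ (ffnet d L m act)) θ i
        = ∑ a, Q a i * G a (rotQ d L m U θ) := by
    intro θ i
    rw [hFU]
    exact gradVec_rotQ F hdiff θ i
  have hsm : ∀ a b : PIdx d L m, AEStronglyMeasurable (fun θ => G a θ * G b θ)
      (ρ.map (fun θ => rotQ d L m U θ)) :=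
    fun a b => ((hgmeas a).mul (hgmeas b)).aestronglyMeasurable
  have hint2 : ∀ a b : PIdx d L m,
      Integrable (fun θ => G a (rotQ d L m U θ) * G b (rotQ d L m U θ)) ρ := by
    intro a b
    have h3 : Integrable (fun θ => G a θ * G b θ) (ρ.map (fun θ => rotQ d L m U θ)) := by
      rw [hmap]; exact hgint a b
    exact (integrable_map_measure (hsm a b) hQmeas.aemeasurable).mp h3
  have hkey : ∀ a b : PIdx d L m,
      ∫ θ, G a (rotQ d L m U θ) * G b (rotQ d L m U θ) ∂ρ = ∫ θ, G a θ * G b θ ∂ρ := by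
    intro a b
    conv_rhs => rw [← hmap]
    rw [integral_map hQmeas.aemeasurable (hsm a b)]
  ext i j
  simp only [EGOP, Matrix.of_apply, hg']
  have hpt : ∀ θ : PSpace d L m,
      (∑ a, Q a i * G a (rotQ d L m U θ)) * (∑ b, Q b j * G b (rotQ d L m U θ))
        = ∑ a, ∑ b, (Q a i * Q b j) * (G a (rotQ d L m U θ) * G b (rotQ d L m U θ)) := by
    intro θ
    rw [Finset.sum_mul_sum]
    exact Finset.sum_congr rfl fun a _ => Finset.sum_congr rfl fun b _ => by ring
  rw [integral_congr_ae (Filter.Eventually.of_forall fun θ => hpt θ)]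
  rw [integral_finset_sum _ (fun a _ => integrable_finset_sum _
    (fun b _ => ((hint2 a b).const_mul _)))]
  have hLHS : ∀ a, ∫ θ, ∑ b, (Q a i * Q b j)
      * (G a (rotQ d L m U θ) * G b (rotQ d L m U θ)) ∂ρ
      = ∑ b, (Q a i * Q b j) * ∫ θ, G a θ * G b θ ∂ρ := by
    intro a
    rw [integral_finset_sum _ (fun b _ => ((hint2 a b).const_mul _))]
    exact Finset.sum_congr rfl fun b _ => by
      rw [integral_const_mul, hkey]
  simp only [hLHS]
  simp only [Matrix.mul_apply, Matrix.transpose_apply, EGOP, Matrix.of_apply,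
    Finset.sum_mul]
  rw [Finset.sum_comm]
  exact Finset.sum_congr rfl fun a _ => Finset.sum_congr rfl fun b _ => by
    rw [hG]; ring
end
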